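/- arXiv:0909.5269 — 2 statements merged into one kernel-verified Lean document; each statement's English description precedes it below -/
import Mathlib

section
/- With s₁ = [[0,1,1],[0,1,0],[0,0,1]], s₂ = [[1,0,0],[1,0,1],[0,0,1]], s₃ = [[1,0,0],[0,1,0],[1,1,0]], the trace of the product (s₃·s₂·s₁)² equals 18, and the nonzero eigenvalues of (s₃·s₂·s₁)² are the roots of λ² − 18λ + 1 = 0, namely 9 ± 4√5. -/
/-!
The product `s₃ s₂ s₁` is `!![0,1,1; 0,1,2; 0,2,3]`, whose square `!![0,3,5; 0,5,8; 0,8,13]` has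
Fibonacci entries. A matrix with vanishing first column has characteristic polynomial `X` times that
of its lower-right `2 × 2` block, here `X² − 18X + 1`, with roots `9 ± 4√5` since `(4√5)² = 9² − 1`.
-/

open Polynomial

namespace Matrix

theorem charpoly_fin_three_of_first_col_zero {R : Type*} [CommRing R] (a b c d e f : R) :
    !![0, a, b; 0, c, d; 0, e, f].charpoly = X * (X ^ 2 - C (c + f) * X + C (c * f - d * e)) := by
  simp only [charpoly, det_fin_three, charmatrix_apply_eq, ne_eq, Fin.reduceEq, not_false_eq_true,
    charmatrix_apply_ne, of_apply, cons_val', cons_val_zero, cons_val_one, cons_val, cons_val_fin_one,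
    map_zero, neg_zero, sub_zero, map_add, map_sub, map_mul]
  ring

end Matrix

theorem sq_sub_mul_add_eq_zero_of_sq_eq {R : Type*} [CommRing R] (p c : R) (h : c ^ 2 = p ^ 2 - 1) :
    (p + c) ^ 2 - 2 * p * (p + c) + 1 = 0 ∧ (p - c) ^ 2 - 2 * p * (p - c) + 1 = 0 :=
  ⟨by linear_combination h, by linear_combination h⟩

/-- The trace of `(s₃·s₂·s₁)²` equals `18`, and its nonzero eigenvalues are the roots of
`λ² − 18λ + 1 = 0`, namely `9 ± 4√5` (the characteristic polynomial is `λ(λ² − 18λ + 1)`). -/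
theorem pochhammer_matrix_trace_and_eigenvalues :
    let s1 : Matrix (Fin 3) (Fin 3) ℤ := !![0, 1, 1; 0, 1, 0; 0, 0, 1]
    let s2 : Matrix (Fin 3) (Fin 3) ℤ := !![1, 0, 0; 1, 0, 1; 0, 0, 1]
    let s3 : Matrix (Fin 3) (Fin 3) ℤ := !![1, 0, 0; 0, 1, 0; 1, 1, 0]
    Matrix.trace ((s3 * s2 * s1) ^ 2) = 18 ∧
    ((s3 * s2 * s1) ^ 2).charpoly = X * (X ^ 2 - 18 * X + 1) ∧
    (9 + 4 * Real.sqrt 5) ^ 2 - 18 * (9 + 4 * Real.sqrt 5) + 1 = 0 ∧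
    (9 - 4 * Real.sqrt 5) ^ 2 - 18 * (9 - 4 * Real.sqrt 5) + 1 = 0 := by
  intro s1 s2 s3
  have hprod : s3 * s2 * s1 = !![0, 1, 1; 0, 1, 2; 0, 2, 3] := by
    simp only [s1, s2, s3, Matrix.mul_fin_three]; norm_num
  have hsq : (s3 * s2 * s1) ^ 2 = !![0, 3, 5; 0, 5, 8; 0, 8, 13] := by
    rw [hprod, sq, Matrix.mul_fin_three]; norm_num
  have hroots := sq_sub_mul_add_eq_zero_of_sq_eq (9 : ℝ) (4 * Real.sqrt 5) (by
    rw [mul_pow, Real.sq_sqrt (by norm_num : (0 : ℝ) ≤ 5)]; norm_num)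
  refine ⟨?_, ?_, by linear_combination hroots.1, by linear_combination hroots.2⟩
  · rw [hsq, Matrix.trace_fin_three_of]; norm_num
  · rw [hsq, Matrix.charpoly_fin_three_of_first_col_zero]; norm_num
end

section
/- Let b = (b₀,b₁,b₂,b₃,b₄) with all bᵢ ∈ ℂ× and b₀²b₁b₂b₃b₄ = 1, set aᵢ = bᵢ + bᵢ⁻¹ for i = 1,…,4, and define θᵢ = aᵢa₄ + aⱼaₖ for {i,j,k} = {1,2,3} and θ₄ = a₁a₂a₃a₄ + a₁² + a₂² + a₃² + a₄² − 4. If b₁b₂b₃b₄ = 1, then the six points c₁ = [0:−b₁b₄:1], c₄ = [0:−b₂b₃:1], c₂ = [−b₁b₃:0:1], c₅ = [−b₂b₄:0:1], c₃ = [−b₃b₄:1:0], c₆ = [−b₁b₂:1:0] in ℙ² all lie on the conic Σⱼ∈ℤ/3 { uⱼ² + (bⱼ⁻¹bⱼ₊₁⁻¹ + bⱼbⱼ₊₁) uⱼuⱼ₊₁ } = 0. -/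
/-!
On each coordinate line `uₖ = 0` the conic restricts to the binary form
`x² + (s⁻¹ + s) x y + y²` with `s = bᵢbⱼ`, whose zeros are `[x : y] = [-s : 1]` and `[-s⁻¹ : 1]`.
When `b₁b₂b₃b₄ = 1`, `s⁻¹` is the product of the two remaining `bₗ`, so the two points `cₘ` on
that line are exactly these zeros.
-/

theorem sq_sub_inv_add_mul_add_one_eq_zero {K : Type*} [Field K] {s t x : K} (h : s * t = 1)
    (hx : x = s ∨ x = t) : x ^ 2 - (s⁻¹ + s) * x + 1 = 0 := by
  rw [inv_eq_of_mul_eq_one_right h]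
  rcases hx with rfl | rfl <;> linear_combination -h

theorem six_points_on_conic_general (b1 b2 b3 b4 : ℂ)
    (hc : b1 * b2 * b3 * b4 = 1) :
    let Q : ℂ → ℂ → ℂ → ℂ := fun u1 u2 u3 =>
      (u1 ^ 2 + (b1⁻¹ * b2⁻¹ + b1 * b2) * u1 * u2) +
      (u2 ^ 2 + (b2⁻¹ * b3⁻¹ + b2 * b3) * u2 * u3) +
      (u3 ^ 2 + (b3⁻¹ * b1⁻¹ + b3 * b1) * u3 * u1)
    Q 0 (-(b1 * b4)) 1 = 0 ∧ Q 0 (-(b2 * b3)) 1 = 0 ∧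
    Q (-(b1 * b3)) 0 1 = 0 ∧ Q (-(b2 * b4)) 0 1 = 0 ∧
    Q (-(b3 * b4)) 1 0 = 0 ∧ Q (-(b1 * b2)) 1 0 = 0 := by
  intro Q
  have h23 : b2 * b3 * (b1 * b4) = 1 := by linear_combination hc
  have h13 : b1 * b3 * (b2 * b4) = 1 := by linear_combination hc
  have h12 : b1 * b2 * (b3 * b4) = 1 := by linear_combination hc
  refine ⟨?_, ?_, ?_, ?_, ?_, ?_⟩
  · linear_combination sq_sub_inv_add_mul_add_one_eq_zero h23 (.inr rfl)
  · linear_combination sq_sub_inv_add_mul_add_one_eq_zero h23 (.inl rfl)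
  · linear_combination sq_sub_inv_add_mul_add_one_eq_zero h13 (.inl rfl)
  · linear_combination sq_sub_inv_add_mul_add_one_eq_zero h13 (.inr rfl)
  · linear_combination sq_sub_inv_add_mul_add_one_eq_zero h12 (.inr rfl)
  · linear_combination sq_sub_inv_add_mul_add_one_eq_zero h12 (.inl rfl)

/-- If `b₁b₂b₃b₄ = 1`, the six indeterminacy points `c₁,…,c₆` of the resolving map
`τ : ℙ² → ℙ³` all lie on the conic
`Σⱼ∈ℤ/3 { uⱼ² + (bⱼ⁻¹bⱼ₊₁⁻¹ + bⱼbⱼ₊₁) uⱼuⱼ₊₁ } = 0`. -/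
theorem six_points_on_conic (b0 b1 b2 b3 b4 : ℂ)
    (h0 : b0 ≠ 0) (h1 : b1 ≠ 0) (h2 : b2 ≠ 0) (h3 : b3 ≠ 0) (h4 : b4 ≠ 0)
    (hB : b0 ^ 2 * b1 * b2 * b3 * b4 = 1)
    (a1 a2 a3 a4 t1 t2 t3 t4 : ℂ)
    (ha1 : a1 = b1 + b1⁻¹) (ha2 : a2 = b2 + b2⁻¹) (ha3 : a3 = b3 + b3⁻¹)
    (ha4 : a4 = b4 + b4⁻¹)
    (ht1 : t1 = a1 * a4 + a2 * a3) (ht2 : t2 = a2 * a4 + a1 * a3)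
    (ht3 : t3 = a3 * a4 + a1 * a2)
    (ht4 : t4 = a1 * a2 * a3 * a4 + a1 ^ 2 + a2 ^ 2 + a3 ^ 2 + a4 ^ 2 - 4)
    (hc : b1 * b2 * b3 * b4 = 1) :
    let Q : ℂ → ℂ → ℂ → ℂ := fun u1 u2 u3 =>
      (u1 ^ 2 + (b1⁻¹ * b2⁻¹ + b1 * b2) * u1 * u2) +
      (u2 ^ 2 + (b2⁻¹ * b3⁻¹ + b2 * b3) * u2 * u3) +
      (u3 ^ 2 + (b3⁻¹ * b1⁻¹ + b3 * b1) * u3 * u1)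
    Q 0 (-(b1 * b4)) 1 = 0 ∧ Q 0 (-(b2 * b3)) 1 = 0 ∧
    Q (-(b1 * b3)) 0 1 = 0 ∧ Q (-(b2 * b4)) 0 1 = 0 ∧
    Q (-(b3 * b4)) 1 0 = 0 ∧ Q (-(b1 * b2)) 1 0 = 0 :=
  six_points_on_conic_general b1 b2 b3 b4 hc
end
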